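/- For β ≥ 1/√3, the function k₂(x) = (β+1)x^{(β+1)/2} − β x^{(β+3)/2} − (β+1)x + β satisfies k₂''(x) < 0 for all x ∈ (β/(β+1), 1), i.e., k₂ is strictly concave on that interval. -/

import Mathlib

/-! With `t = x ^ ((β - 3) / 2) > 0` one gets
`k₂''(x) = (β + 1) / 4 * t * (β² - 1 - β (β + 3) x)`, and for `β ≥ 0` the last factor is
decreasing in `x`; at `x = β / (β + 1)` it equals `-(2β² + β + 1) / (β + 1) < 0`. -/

noncomputable def k2Fun (β x : ℝ) : ℝ :=
  (β + 1) * x ^ ((β + 1) / 2) - β * x ^ ((β + 3) / 2) - (β + 1) * x + β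

noncomputable def k2Deriv (β x : ℝ) : ℝ :=
  (β + 1) ^ 2 / 2 * x ^ ((β - 1) / 2) - β * (β + 3) / 2 * x ^ ((β + 1) / 2) - (β + 1)

open Real

lemma hasDerivAt_k2Fun (β : ℝ) {x : ℝ} (hx : 0 < x) : HasDerivAt (k2Fun β) (k2Deriv β x) x := by
  have h₁ := (hasDerivAt_rpow_const (p := (β + 1) / 2) (Or.inl hx.ne')).const_mul (β + 1)
  have h₂ := (hasDerivAt_rpow_const (p := (β + 3) / 2) (Or.inl hx.ne')).const_mul β
  refine (((h₁.sub h₂).sub ((hasDerivAt_id x).const_mul (β + 1))).add_const β).congr_deriv ?_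
  rw [k2Deriv, show (β + 1) / 2 - 1 = (β - 1) / 2 by ring, show (β + 3) / 2 - 1 = (β + 1) / 2 by ring]
  ring

lemma hasDerivAt_k2Deriv (β : ℝ) {x : ℝ} (hx : 0 < x) :
    HasDerivAt (k2Deriv β)
      ((β + 1) / 4 * x ^ ((β - 3) / 2) * (β ^ 2 - 1 - β * (β + 3) * x)) x := by
  have h₁ := (hasDerivAt_rpow_const (p := (β - 1) / 2) (Or.inl hx.ne')).const_mul ((β + 1) ^ 2 / 2)
  have h₂ := (hasDerivAt_rpow_const (p := (β + 1) / 2) (Or.inl hx.ne')).const_mul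
    (β * (β + 3) / 2)
  refine ((h₁.sub h₂).sub_const (β + 1)).congr_deriv ?_
  rw [show (β - 1) / 2 - 1 = (β - 3) / 2 by ring, show (β + 1) / 2 - 1 = (β - 3) / 2 + 1 by ring,
    rpow_add_one hx.ne']
  ring

lemma deriv_deriv_k2Fun (β : ℝ) {x : ℝ} (hx : 0 < x) :
    deriv (deriv (k2Fun β)) x = (β + 1) / 4 * x ^ ((β - 3) / 2) * (β ^ 2 - 1 - β * (β + 3) * x) := by
  have hderiv : deriv (k2Fun β) =ᶠ[nhds x] k2Deriv β := by
    filter_upwards [Ioi_mem_nhds hx] with y hy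
    exact (hasDerivAt_k2Fun β hy).deriv
  rw [hderiv.deriv_eq, (hasDerivAt_k2Deriv β hx).deriv]

lemma sq_sub_one_sub_mul_lt_zero {β x : ℝ} (hβ : 0 ≤ β) (hx : β / (β + 1) < x) :
    β ^ 2 - 1 - β * (β + 3) * x < 0 := by
  have hβx : β < (β + 1) * x := (div_lt_iff₀' (by linarith)).mp hx
  nlinarith [mul_le_mul_of_nonneg_left hβx.le (by positivity : 0 ≤ β * (β + 3))]

lemma deriv_deriv_k2Fun_neg {β x : ℝ} (hβ : 0 ≤ β) (hx : β / (β + 1) < x) :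
    deriv (deriv (k2Fun β)) x < 0 := by
  have hx₀ : 0 < x := lt_of_le_of_lt (by positivity) hx
  rw [deriv_deriv_k2Fun β hx₀]
  exact mul_neg_of_pos_of_neg (by positivity) (sq_sub_one_sub_mul_lt_zero hβ hx)

/-- For β ≥ 1/√3, k₂''(x) < 0 on (β/(β+1), 1), i.e. k₂ is strictly concave there. -/
theorem k2_second_deriv_neg (β : ℝ) (hβ : 1 / Real.sqrt 3 ≤ β) :
    (∀ x ∈ Set.Ioo (β / (β + 1)) 1, deriv (deriv (k2Fun β)) x < 0) ∧
      StrictConcaveOn ℝ (Set.Ioo (β / (β + 1)) 1) (k2Fun β) := by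
  have hβ₀ : 0 ≤ β := le_trans (by positivity) hβ
  have hneg : ∀ x ∈ Set.Ioo (β / (β + 1)) 1, deriv (deriv (k2Fun β)) x < 0 :=
    fun x hx => deriv_deriv_k2Fun_neg hβ₀ hx.1
  refine ⟨hneg, strictConcaveOn_of_deriv2_neg (convex_Ioo _ _) ?_ ?_⟩
  · intro x hx
    have hx₀ : 0 < x := lt_of_le_of_lt (by positivity) hx.1
    exact (hasDerivAt_k2Fun β hx₀).continuousAt.continuousWithinAt
  · rw [interior_Ioo]
    exact hneg
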